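/- For any two probability measures f, g on ℝ^d with means μ1, μ2 and covariance matrices Σ1, Σ2, the squared 2-Wasserstein distance satisfies W₂(f, g)² ≥ ‖μ1 − μ2‖² + trace(Σ1 + Σ2 − 2(Σ1^{1/2} Σ2 Σ1^{1/2})^{1/2}). -/

import Mathlib

/-!
Fix a coupling `π` of `f` and `g` and write `u = x - μ₁`, `w = y - μ₂`. With `A = Σ₁^{1/2}`,
`R = (A Σ₂ A)^{1/2}` and `T = A⁻¹ R A⁻¹`, the inequality `2 ⟪u, w⟫ ≤ ⟪u, T u⟫ + ⟪w, T⁻¹ w⟫`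
bounds `‖x - y‖²` below by `φ x + ψ y` with `φ`, `ψ` quadratic. Integrating against `π` only
sees the marginals, so `∫ ‖x - y‖² dπ ≥ ∫ φ df + ∫ ψ dg
= ‖μ₁ - μ₂‖² + tr Σ₁ + tr Σ₂ - tr (T Σ₁) - tr (T⁻¹ Σ₂)`, and `tr (T Σ₁) = tr (T⁻¹ Σ₂) = tr R`.
-/

open MeasureTheory Matrix

noncomputable def W2sq {d : ℕ} (μ ν : Measure (Fin d → ℝ)) : ℝ :=
  sInf {r | ∃ π : Measure ((Fin d → ℝ) × (Fin d → ℝ)),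
    π.map Prod.fst = μ ∧ π.map Prod.snd = ν ∧
    r = ∫ p, ∑ i, (p.1 i - p.2 i) ^ 2 ∂π}

noncomputable def W2 {d : ℕ} (μ ν : Measure (Fin d → ℝ)) : ℝ :=
  Real.sqrt (W2sq μ ν)

open scoped ComplexOrder in
/-- The positive semidefinite square root of a positive semidefinite matrix
(the definition of `Matrix.PosSemidef.sqrt` in the older Mathlib). -/
noncomputable def Matrix.PosSemidef.sqrt {n 𝕜 : Type*} [Fintype n] [RCLike 𝕜] [DecidableEq n]
    {A : Matrix n n 𝕜} (hA : Matrix.PosSemidef A) : Matrix n n 𝕜 :=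
  hA.1.eigenvectorUnitary.1 * diagonal ((↑) ∘ (√·) ∘ hA.1.eigenvalues) *
  (star hA.1.eigenvectorUnitary : Matrix n n 𝕜)

namespace Matrix

variable {n : Type*} [Fintype n] [DecidableEq n]

lemma PosSemidef.posSemidef_sqrt {A : Matrix n n ℝ} (hA : A.PosSemidef) : hA.sqrt.PosSemidef := by
  have hdiag : (diagonal (RCLike.ofReal ∘ (√·) ∘ hA.1.eigenvalues : n → ℝ)).PosSemidef :=
    PosSemidef.diagonal fun i => Real.sqrt_nonneg _
  unfold PosSemidef.sqrt
  simpa [star_eq_conjTranspose] using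
    hdiag.mul_mul_conjTranspose_same (hA.1.eigenvectorUnitary : Matrix n n ℝ)

lemma PosSemidef.sqrt_mul_self {A : Matrix n n ℝ} (hA : A.PosSemidef) : hA.sqrt * hA.sqrt = A := by
  let C : Matrix n n ℝ := hA.1.eigenvectorUnitary
  let E := diagonal (RCLike.ofReal ∘ (√·) ∘ hA.1.eigenvalues : n → ℝ)
  have hEE : E * E = diagonal (RCLike.ofReal ∘ hA.1.eigenvalues) := by
    rw [diagonal_mul_diagonal]
    congr! with i
    simp [← pow_two, Real.sq_sqrt (hA.eigenvalues_nonneg i)]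
  have hCC : star C * C = 1 := Unitary.coe_star_mul_self _
  have hspec := hA.1.spectral_theorem
  rw [Unitary.conjStarAlgAut_apply] at hspec
  calc hA.sqrt * hA.sqrt = C * (E * (star C * C) * E) * star C := by
        simp only [PosSemidef.sqrt, C, E, mul_assoc]
    _ = A := by rw [hCC, mul_one, hEE]; exact hspec.symm

lemma PosDef.posDef_sqrt {A : Matrix n n ℝ} (hA : A.PosDef) : hA.posSemidef.sqrt.PosDef := by
  have hunit : IsUnit (hA.posSemidef.sqrt * hA.posSemidef.sqrt) := by
    rw [hA.posSemidef.sqrt_mul_self]; exact hA.isUnit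
  exact hA.posSemidef.posSemidef_sqrt.posDef_iff_isUnit.mpr (isUnit_of_mul_isUnit_left hunit)

lemma PosSemidef.two_mul_dotProduct_le {T T' : Matrix n n ℝ} (hT : T.PosSemidef)
    (hTT' : T * T' = 1) (u w : n → ℝ) :
    2 * (u ⬝ᵥ w) ≤ u ⬝ᵥ T *ᵥ u + w ⬝ᵥ T' *ᵥ w := by
  have hsymm : ∀ a b : n → ℝ, a ⬝ᵥ T *ᵥ b = b ⬝ᵥ T *ᵥ a := fun a b => by
    rw [dotProduct_mulVec, ← mulVec_transpose, dotProduct_comm,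
      ← conjTranspose_eq_transpose_of_trivial, hT.isHermitian.eq]
  have hTT'w : T *ᵥ (T' *ᵥ w) = w := by rw [mulVec_mulVec, hTT', one_mulVec]
  have h := hT.dotProduct_mulVec_nonneg (u - T' *ᵥ w)
  rw [star_trivial, mulVec_sub, hTT'w, dotProduct_sub, sub_dotProduct, sub_dotProduct,
    hsymm (T' *ᵥ w) u, hTT'w, dotProduct_comm (T' *ᵥ w) w] at h
  linarith

/-- `T = A⁻¹ R A⁻¹`, with `A = S₁^{1/2}` and `R = (A S₂ A)^{1/2}`, is the matrix of the optimal
transport map from the centred Gaussian of covariance `S₁` to that of covariance `S₂`. -/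
lemma exists_posSemidef_mul_eq_one_trace_eq {S₁ S₂ : Matrix n n ℝ} (h₁ : S₁.PosDef)
    (h₂ : S₂.PosDef) (h₁₂ : (h₁.posSemidef.sqrt * S₂ * h₁.posSemidef.sqrt).PosSemidef) :
    ∃ T T' : Matrix n n ℝ, T.PosSemidef ∧ T * T' = 1 ∧
      (T * S₁).trace = h₁₂.sqrt.trace ∧ (T' * S₂).trace = h₁₂.sqrt.trace := by
  set A := h₁.posSemidef.sqrt
  set R := h₁₂.sqrt
  have hA : A.PosDef := h₁.posDef_sqrt
  have hAA : A * A = S₁ := h₁.posSemidef.sqrt_mul_self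
  have hRR : R * R = A * S₂ * A := h₁₂.sqrt_mul_self
  have hR : R.PosDef := by
    have hASA : (A * S₂ * A).PosDef := by
      simpa only [hA.isHermitian.eq] using
        h₂.conjTranspose_mul_mul_same (mulVec_injective_of_isUnit hA.isUnit)
    exact hASA.posDef_sqrt
  have hAi : A⁻¹ * A = 1 := nonsing_inv_mul A (isUnit_iff_isUnit_det A |>.mp hA.isUnit)
  have hAi' : A * A⁻¹ = 1 := mul_nonsing_inv A (isUnit_iff_isUnit_det A |>.mp hA.isUnit)
  have hRi : R⁻¹ * R = 1 := nonsing_inv_mul R (isUnit_iff_isUnit_det R |>.mp hR.isUnit)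
  have hRi' : R * R⁻¹ = 1 := mul_nonsing_inv R (isUnit_iff_isUnit_det R |>.mp hR.isUnit)
  refine ⟨A⁻¹ * R * A⁻¹, A * R⁻¹ * A, ?_, ?_, ?_, ?_⟩
  · simpa only [hA.inv.isHermitian.eq] using h₁₂.posSemidef_sqrt.mul_mul_conjTranspose_same A⁻¹
  · simp only [mul_assoc]
    rw [← mul_assoc A⁻¹ A, hAi, one_mul, ← mul_assoc R, hRi', one_mul, hAi]
  · calc (A⁻¹ * R * A⁻¹ * S₁).trace = (A⁻¹ * (R * A)).trace := by
          rw [← hAA, mul_assoc _ A⁻¹, ← mul_assoc A⁻¹ A, hAi, one_mul, mul_assoc]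
      _ = R.trace := by rw [trace_mul_comm, mul_assoc, hAi', mul_one]
  · calc (A * R⁻¹ * A * S₂).trace = (R⁻¹ * (A * S₂ * A)).trace := by
          rw [mul_assoc, mul_assoc, trace_mul_comm]; simp only [mul_assoc]
      _ = R.trace := by rw [← hRR, ← mul_assoc, hRi, one_mul]

end Matrix

section CenteredQuadratic

variable {ι : Type*} [Fintype ι]

def centeredQuadratic (c : ℝ) (v : ι → ℝ) (M : Matrix ι ι ℝ) (m x : ι → ℝ) : ℝ :=
  c + v ⬝ᵥ (x - m) + (x - m) ⬝ᵥ M *ᵥ (x - m)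

lemma centeredQuadratic_eq_sum (c : ℝ) (v : ι → ℝ) (M : Matrix ι ι ℝ) (m x : ι → ℝ) :
    centeredQuadratic c v M m x =
      c + ∑ i, v i * (x i - m i) + ∑ i, ∑ j, M i j * ((x i - m i) * (x j - m j)) := by
  simp only [centeredQuadratic, dotProduct, mulVec, Finset.mul_sum, Pi.sub_apply]
  congr 1
  exact Finset.sum_congr rfl fun i _ => Finset.sum_congr rfl fun j _ => by ring

lemma centeredQuadratic_add_centeredQuadratic_le [DecidableEq ι] {T T' : Matrix ι ι ℝ}
    (hT : T.PosSemidef) (hTT' : T * T' = 1) (m₁ m₂ x y : ι → ℝ) :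
    centeredQuadratic ((m₁ - m₂) ⬝ᵥ (m₁ - m₂)) ((2 : ℝ) • (m₁ - m₂)) (1 - T) m₁ x +
      centeredQuadratic 0 ((-2 : ℝ) • (m₁ - m₂)) (1 - T') m₂ y ≤ ∑ i, (x i - y i) ^ 2 := by
  have hsq : ∑ i, (x i - y i) ^ 2 = (x - y) ⬝ᵥ (x - y) := by simp [dotProduct, sq]
  have hxy : x - y = (m₁ - m₂) + (x - m₁) - (y - m₂) := by abel
  have hyoung := hT.two_mul_dotProduct_le hTT' (x - m₁) (y - m₂)
  rw [hsq, hxy]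
  simp only [centeredQuadratic]
  generalize m₁ - m₂ = δ, x - m₁ = u, y - m₂ = w at *
  simp only [sub_mulVec, one_mulVec, dotProduct_sub, sub_dotProduct, dotProduct_add,
    add_dotProduct, smul_dotProduct, smul_eq_mul, dotProduct_comm u δ,
    dotProduct_comm w δ, dotProduct_comm w u]
  linarith

end CenteredQuadratic

section SecondMoments

variable {ι : Type*} [Fintype ι] {μ : Measure (ι → ℝ)}

lemma memLp_two_apply (hμ : Integrable (fun x => ∑ i, x i ^ 2) μ) (i : ι) :
    MemLp (fun x => x i) 2 μ := by
  refine (memLp_two_iff_integrable_sq (measurable_pi_apply i).aestronglyMeasurable).mpr <|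
    hμ.mono' ((measurable_pi_apply i).pow_const 2).aestronglyMeasurable (ae_of_all _ fun x => ?_)
  rw [Real.norm_of_nonneg (sq_nonneg _)]
  exact Finset.single_le_sum (fun j _ => sq_nonneg (x j)) (Finset.mem_univ i)

variable (hμ : Integrable (fun x => ∑ i, x i ^ 2) μ) (m : ι → ℝ)
include hμ

lemma integrable_apply_sub [IsFiniteMeasure μ] (i : ι) : Integrable (fun x => x i - m i) μ :=
  ((memLp_two_apply hμ i).integrable one_le_two).sub (integrable_const _)

lemma integrable_apply_sub_mul_apply_sub [IsFiniteMeasure μ] (i j : ι) :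
    Integrable (fun x => (x i - m i) * (x j - m j)) μ :=
  ((memLp_two_apply hμ i).sub (memLp_const _)).integrable_mul
    ((memLp_two_apply hμ j).sub (memLp_const _))

lemma integrable_centeredQuadratic [IsFiniteMeasure μ] (c : ℝ) (v : ι → ℝ) (M : Matrix ι ι ℝ) :
    Integrable (centeredQuadratic c v M m) μ := by
  rw [funext (centeredQuadratic_eq_sum c v M m)]
  exact ((integrable_const c).add (integrable_finsetSum _ fun i _ =>
    (integrable_apply_sub hμ m i).const_mul _)).add (integrable_finsetSum _ fun i _ =>
      integrable_finsetSum _ fun j _ => (integrable_apply_sub_mul_apply_sub hμ m i j).const_mul _)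

lemma integral_centeredQuadratic [IsProbabilityMeasure μ] {S : Matrix ι ι ℝ}
    (hm : ∀ i, ∫ x, x i ∂μ = m i) (hS : ∀ i j, ∫ x, (x i - m i) * (x j - m j) ∂μ = S i j)
    (c : ℝ) (v : ι → ℝ) (M : Matrix ι ι ℝ) :
    ∫ x, centeredQuadratic c v M m x ∂μ = c + (M * S).trace := by
  have hlin (i : ι) : ∫ x, v i * (x i - m i) ∂μ = 0 := by
    rw [integral_const_mul, integral_sub ((memLp_two_apply hμ i).integrable one_le_two)
      (integrable_const _), hm, integral_const, probReal_univ, one_smul, sub_self, mul_zero]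
  have hquad (i : ι) : ∫ x, ∑ j, M i j * ((x i - m i) * (x j - m j)) ∂μ = ∑ j, M i j * S i j := by
    rw [integral_finsetSum _ fun j _ => (integrable_apply_sub_mul_apply_sub hμ m i j).const_mul _]
    simp only [integral_const_mul, hS]
  have hS_symm (i j : ι) : S j i = S i j := by
    simp only [← hS, mul_comm]
  have hlinInt : Integrable (fun x => ∑ i, v i * (x i - m i)) μ :=
    integrable_finsetSum _ fun i _ => (integrable_apply_sub hμ m i).const_mul _
  have hquadInt (i : ι) : Integrable (fun x => ∑ j, M i j * ((x i - m i) * (x j - m j))) μ :=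
    integrable_finsetSum _ fun j _ => (integrable_apply_sub_mul_apply_sub hμ m i j).const_mul _
  have haffInt : Integrable (fun x => c + ∑ i, v i * (x i - m i)) μ :=
    (integrable_const c).add hlinInt
  simp_rw [centeredQuadratic_eq_sum]
  rw [integral_add haffInt (integrable_finsetSum _ fun i _ => hquadInt i),
    integral_add (integrable_const c) hlinInt, integral_const,
    integral_finsetSum _ fun i _ => (integrable_apply_sub hμ m i).const_mul _,
    integral_finsetSum _ fun i _ => hquadInt i]
  simp [hlin, hquad, trace, mul_apply, hS_symm]

end SecondMoments

section Coupling

variable {α β : Type*} [MeasurableSpace α] [MeasurableSpace β] {μ : Measure α} {ν : Measure β}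
  {π : Measure (α × β)}

lemma integral_add_integral_le_integral_of_map (hπ₁ : π.map Prod.fst = μ)
    (hπ₂ : π.map Prod.snd = ν) {φ : α → ℝ} {ψ : β → ℝ} {c : α × β → ℝ} (hφ : Integrable φ μ)
    (hψ : Integrable ψ ν) (hc : Integrable c π) (hle : ∀ x y, φ x + ψ y ≤ c (x, y)) :
    ∫ x, φ x ∂μ + ∫ y, ψ y ∂ν ≤ ∫ p, c p ∂π := by
  subst hπ₁ hπ₂
  rw [integral_map measurable_fst.aemeasurable hφ.aestronglyMeasurable,
    integral_map measurable_snd.aemeasurable hψ.aestronglyMeasurable]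
  have hφ' : Integrable (fun p : α × β => φ p.1) π :=
    hφ.comp_aemeasurable measurable_fst.aemeasurable
  have hψ' : Integrable (fun p : α × β => ψ p.2) π :=
    hψ.comp_aemeasurable measurable_snd.aemeasurable
  rw [← integral_add hφ' hψ']
  exact integral_mono (hφ'.add hψ') hc fun p => hle p.1 p.2

end Coupling

lemma integrable_sum_sq_sub_of_map {ι : Type*} [Fintype ι] {μ ν : Measure (ι → ℝ)}
    {π : Measure ((ι → ℝ) × (ι → ℝ))} (hπ₁ : π.map Prod.fst = μ) (hπ₂ : π.map Prod.snd = ν)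
    (hμ : Integrable (fun x => ∑ i, x i ^ 2) μ) (hν : Integrable (fun x => ∑ i, x i ^ 2) ν) :
    Integrable (fun p : (ι → ℝ) × (ι → ℝ) => ∑ i, (p.1 i - p.2 i) ^ 2) π :=
  integrable_finsetSum _ fun i _ =>
    (((memLp_two_apply hμ i).comp_measurePreserving ⟨measurable_fst, hπ₁⟩).sub
      ((memLp_two_apply hν i).comp_measurePreserving ⟨measurable_snd, hπ₂⟩)).integrable_sq

lemma integral_add_integral_le_W2sq {d : ℕ} {μ ν : Measure (Fin d → ℝ)}
    [IsProbabilityMeasure μ] [IsProbabilityMeasure ν]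
    (hμ : Integrable (fun x => ∑ i, x i ^ 2) μ) (hν : Integrable (fun x => ∑ i, x i ^ 2) ν)
    {φ ψ : (Fin d → ℝ) → ℝ} (hφ : Integrable φ μ) (hψ : Integrable ψ ν)
    (hle : ∀ x y, φ x + ψ y ≤ ∑ i, (x i - y i) ^ 2) :
    ∫ x, φ x ∂μ + ∫ y, ψ y ∂ν ≤ W2sq μ ν := by
  refine le_csInf ⟨_, μ.prod ν, by simp, by simp, rfl⟩ ?_
  rintro _ ⟨π, hπ₁, hπ₂, rfl⟩
  exact integral_add_integral_le_integral_of_map hπ₁ hπ₂ hφ hψ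
    (integrable_sum_sq_sub_of_map hπ₁ hπ₂ hμ hν) hle

theorem stmt10 {d : ℕ} (f g : Measure (Fin d → ℝ))
    [IsProbabilityMeasure f] [IsProbabilityMeasure g]
    (hf : Integrable (fun x => ∑ i, x i ^ 2) f)
    (hg : Integrable (fun x => ∑ i, x i ^ 2) g)
    (μ1 μ2 : Fin d → ℝ) (S1 S2 : Matrix (Fin d) (Fin d) ℝ)
    (hμ1 : μ1 = fun i => ∫ x, x i ∂f) (hμ2 : μ2 = fun i => ∫ x, x i ∂g)
    (hS1 : S1 = Matrix.of fun i j => ∫ x, (x i - μ1 i) * (x j - μ1 j) ∂f)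
    (hS2 : S2 = Matrix.of fun i j => ∫ x, (x i - μ2 i) * (x j - μ2 j) ∂g)
    (h1 : S1.PosDef) (h2 : S2.PosDef)
    (h12 : (h1.posSemidef.sqrt * S2 * h1.posSemidef.sqrt).PosSemidef) :
    W2sq f g ≥ ∑ i, (μ1 i - μ2 i) ^ 2 + (S1 + S2 - (2 : ℝ) • h12.sqrt).trace := by
  obtain ⟨T, T', hT, hTT', htrT, htrT'⟩ := exists_posSemidef_mul_eq_one_trace_eq h1 h2 h12
  have key := integral_add_integral_le_W2sq hf hg (integrable_centeredQuadratic hf μ1 _ _ _)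
    (integrable_centeredQuadratic hg μ2 _ _ _)
    (centeredQuadratic_add_centeredQuadratic_le hT hTT' μ1 μ2)
  rw [integral_centeredQuadratic hf μ1 (S := S1) (by simp [hμ1]) (by simp [hS1]),
    integral_centeredQuadratic hg μ2 (S := S2) (by simp [hμ2]) (by simp [hS2])] at key
  have hdist : ∑ i, (μ1 i - μ2 i) ^ 2 = (μ1 - μ2) ⬝ᵥ (μ1 - μ2) := by simp [dotProduct, sq]
  rw [ge_iff_le, hdist, trace_sub, trace_add, trace_smul, smul_eq_mul]
  rw [sub_mul, sub_mul, one_mul, one_mul, trace_sub, trace_sub, htrT, htrT'] at key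
  linarith
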